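/- Let 𝕋 be an almost periodic time scale (Π ≠ {0}) and u ∈ U_∞^Inv. Then PAP(𝕋,ℝⁿ,u), equipped with the sup-norm ‖f‖_∞ = sup_{t∈𝕋} ‖f(t)‖, is a complete metric space (a Banach space, being a closed subspace of the Banach space of bounded continuous functions 𝕋 → ℝⁿ). -/

import Mathlib

open MeasureTheory Filter Set

noncomputable section

/-- Forward jump operator of a time scale `T`. -/
def tsSigma (T : Set ℝ) (t : ℝ) : ℝ := sInf {s | s ∈ T ∧ t < s}

/-- Graininess of a time scale. -/
def tsGrain (T : Set ℝ) (t : ℝ) : ℝ := tsSigma T t - t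

/-- The set `Π` of translation numbers of a time scale. -/
def tsPi (T : Set ℝ) : Set ℝ := {τ : ℝ | ∀ t ∈ T, t + τ ∈ T ∧ t - τ ∈ T}

/-- An almost periodic time scale: a nonempty closed subset of `ℝ` with `Π ≠ {0}`. -/
def APTimeScale (T : Set ℝ) : Prop :=
  T.Nonempty ∧ IsClosed T ∧ ∃ τ ∈ tsPi T, τ ≠ 0

/-- The Δ-measure of the time scale `T`:
Lebesgue measure restricted to `T` plus point masses `μ(t)·δ_t` at right-scattered points. -/
def deltaMeasure (T : Set ℝ) : Measure ℝ :=
  volume.restrict T +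
    Measure.sum (fun p : {t : ℝ // t ∈ T ∧ t < tsSigma T t} =>
      (ENNReal.ofReal (tsGrain T p.1)) • Measure.dirac (p.1 : ℝ))

/-- The integrand `g_a` appearing in the generalized exponential function. -/
def gExp (T : Set ℝ) (a : ℝ) (τ : ℝ) : ℝ :=
  if 0 < tsGrain T τ then Real.log (1 + tsGrain T τ * a) / tsGrain T τ else a

/-- The generalized exponential function `e_{⊖a}(t, s)` (intended for `s ≤ t`). -/
def eOminus (T : Set ℝ) (a t s : ℝ) : ℝ :=
  Real.exp (-∫ τ in Ico s t ∩ T, gExp T a τ ∂(deltaMeasure T))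

/-- `t̄ = min([0,∞) ∩ T)`. -/
def tsT0 (T : Set ℝ) : ℝ := sInf {t : ℝ | t ∈ T ∧ 0 ≤ t}

/-- `Q_r = [t̄ - r, t̄ + r] ∩ T`. -/
def Qr (T : Set ℝ) (r : ℝ) : Set ℝ := Icc (tsT0 T - r) (tsT0 T + r) ∩ T

/-- `u(Q_r) = ∫_{Q_r} u dμ_Δ`. -/
def uQ (T : Set ℝ) (u : ℝ → ℝ) (r : ℝ) : ℝ := ∫ t in Qr T r, u t ∂(deltaMeasure T)

/-- The filter `r → ∞` along `Π`. -/
def alongPi (T : Set ℝ) : Filter ℝ := atTop ⊓ 𝓟 (tsPi T)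

/-- The filter `|t| → ∞`, `t ∈ T`. -/
def absAtTopIn (T : Set ℝ) : Filter ℝ := (atTop ⊔ atBot) ⊓ 𝓟 T

/-- The class `U_∞` of admissible weights on the time scale `T`. -/
def UInfty (T : Set ℝ) (u : ℝ → ℝ) : Prop :=
  Measurable u ∧ (∀ t ∈ T, 0 < u t) ∧
  (∀ s : Set ℝ, Bornology.IsBounded s → IntegrableOn u (s ∩ T) (deltaMeasure T)) ∧
  (∃ c > 0, ∀ t ∈ T, c ≤ u t) ∧
  Tendsto (uQ T u) (alongPi T) atTop

/-- The class `U_∞^Inv` of weights: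
`limsup_{|t|→∞, t∈T} u(t+s)/u(t) < ∞` for every `s ∈ Π`. -/
def UInftyInv (T : Set ℝ) (u : ℝ → ℝ) : Prop :=
  UInfty T u ∧ ∀ s ∈ tsPi T, ∃ C : ℝ, ∀ᶠ t in absAtTopIn T, u (t + s) / u t ≤ C

variable {E : Type*} [NormedAddCommGroup E]

/-- Almost periodic functions on a time scale (Bohr-type definition via `Π`). -/
def APfun (T : Set ℝ) (f : ℝ → E) : Prop :=
  ContinuousOn f T ∧
  ∀ ε > 0, ∃ l > 0, ∀ x : ℝ, ∃ τ ∈ tsPi T, τ ∈ Icc x (x + l) ∧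
    ∀ t ∈ T, ‖f (t + τ) - f t‖ < ε

/-- Bounded continuous functions on the time scale `T`. -/
def BCfun (T : Set ℝ) (f : ℝ → E) : Prop :=
  ContinuousOn f T ∧ ∃ C : ℝ, ∀ t ∈ T, ‖f t‖ ≤ C

/-- The weighted ergodic space `PAP₀(T, E, u)`. -/
def PAP0fun (T : Set ℝ) (u : ℝ → ℝ) (f : ℝ → E) : Prop :=
  BCfun T f ∧
  Tendsto (fun r => (uQ T u r)⁻¹ * ∫ t in Qr T r, ‖f t‖ * u t ∂(deltaMeasure T))
    (alongPi T) (nhds 0)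

/-- Weighted pseudo-almost periodic functions on the time scale `T`. -/
def PAPfun (T : Set ℝ) (u : ℝ → ℝ) (f : ℝ → E) : Prop :=
  ∃ g h : ℝ → E, APfun T g ∧ PAP0fun T u h ∧ ∀ t ∈ T, f t = g t + h t

/-- `d` is the Δ-derivative of `f` at `t ∈ T`. -/
def deltaDeriv [NormedSpace ℝ E] (T : Set ℝ) (f : ℝ → E) (t : ℝ) (d : E) : Prop :=
  ∀ ε > 0, ∃ δ > 0, ∀ s ∈ T, |s - t| < δ →
    ‖f (tsSigma T t) - f s - (tsSigma T t - s) • d‖ ≤ ε * |tsSigma T t - s|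

/-- A fixed matrix norm (the ℓ¹ norm of the entries). -/
def matNorm {n : ℕ} (M : Matrix (Fin n) (Fin n) ℝ) : ℝ := ∑ i, ∑ j, |M i j|

/-- The linear system `x^Δ = A(t) x` admits an exponential dichotomy on `T`. -/
def ExpDichotomy {n : ℕ} (T : Set ℝ) (A : ℝ → Matrix (Fin n) (Fin n) ℝ) : Prop :=
  ∃ K > (0 : ℝ), ∃ α > (0 : ℝ), ∃ P : Matrix (Fin n) (Fin n) ℝ, P * P = P ∧
    ∃ X : ℝ → Matrix (Fin n) (Fin n) ℝ,
      (∀ t ∈ T, IsUnit (X t)) ∧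
      (∀ t ∈ T, ∀ i j, deltaDeriv T (fun s => X s i j) t ((A t * X t) i j)) ∧
      (∀ s ∈ T, ∀ t ∈ T, tsSigma T s ≤ t →
        matNorm (X t * P * (X (tsSigma T s))⁻¹) ≤ K * eOminus T α t (tsSigma T s)) ∧
      (∀ s ∈ T, ∀ t ∈ T, t ≤ tsSigma T s →
        matNorm (X t * (1 - P) * (X (tsSigma T s))⁻¹) ≤ K * eOminus T α (tsSigma T s) t)

/-- `x` is a bounded continuous solution on `T` of `x^Δ(t) = A(t) x(t) + F(t)`. -/
def IsLinBddSol {n : ℕ} (T : Set ℝ) (A : ℝ → Matrix (Fin n) (Fin n) ℝ)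
    (F x : ℝ → Fin n → ℝ) : Prop :=
  BCfun T x ∧ ∀ t ∈ T, deltaDeriv T x t ((A t).mulVec (x t) + F t)

/-- `x` is a (continuous, Δ-differentiable) solution of the delayed cellular neural network
on the set `S ⊆ T`. -/
def IsCNNSol {n : ℕ} (T S : Set ℝ) (c : Fin n → ℝ → ℝ) (a b : Fin n → Fin n → ℝ → ℝ)
    (f : Fin n → ℝ → ℝ) (γ : Fin n → Fin n → ℝ) (I : Fin n → ℝ → ℝ)
    (x : ℝ → Fin n → ℝ) : Prop :=
  ContinuousOn x T ∧
  ∀ t ∈ S, ∀ i, deltaDeriv T (fun s => x s i) t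
    (-(c i t) * x t i + (∑ j, a i j t * f j (x t j)) +
      (∑ j, b i j t * f j (x (t - γ i j) j)) + I i t)

end

/-!
The uniform limit `F` of a sequence in `PAP` is approximated by members `f_j` with
`‖f_{j+1} - f_j‖ ≤ 2^{-j-1}` on `T`. Their almost periodic parts need not converge, but they can be
re-chosen so that they do: if `f = g + h` and `f' = g' + h'` with `‖f' - f‖ ≤ δ`, then
`‖g' - g‖ ≤ δ + ‖h' - h‖`, so the radial truncation `ρ` of `g' - g` at level `δ` is almost periodic
with `‖ρ‖ ≤ δ`, while `‖g' - g - ρ‖ ≤ ‖h' - h‖` makes `g' - g - ρ` ergodic; hence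
`f' = (g + ρ) + (h' + g' - g - ρ)` is a decomposition whose almost periodic part is `δ`-close to `g`.
The re-chosen almost periodic parts converge uniformly to an almost periodic function, the ergodic
parts converge uniformly as well, and `PAP₀` is closed under uniform limits because the weighted
mean is monotone and subadditive.
-/

open scoped NNReal Topology

theorem sub_mem_tsPi {T : Set ℝ} {τ₁ τ₂ : ℝ} (h₁ : τ₁ ∈ tsPi T) (h₂ : τ₂ ∈ tsPi T) :
    τ₁ - τ₂ ∈ tsPi T := fun t ht =>
  ⟨by convert (h₁ _ (h₂ t ht).2).1 using 1; ring,
    by convert (h₂ _ (h₁ t ht).2).1 using 1; ring⟩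

theorem exists_finset_forall_dist_lt {ι α : Type*} [PseudoMetricSpace α] [ProperSpace α]
    {d : ι → α} (hd : Bornology.IsBounded (range d)) {δ : ℝ} (hδ : 0 < δ) :
    ∃ S : Finset ι, ∀ i, ∃ j ∈ S, dist (d i) (d j) < δ := by
  obtain ⟨S, hS⟩ := hd.isCompact_closure.elim_finite_subcover (fun j => Metric.ball (d j) δ)
    (fun _ => Metric.isOpen_ball) fun z hz => by
      obtain ⟨_, ⟨j, rfl⟩, hj⟩ := Metric.mem_closure_iff.1 hz δ hδ
      exact mem_iUnion.2 ⟨j, hj⟩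
  refine ⟨S, fun i => ?_⟩
  simpa using hS (subset_closure (mem_range_self i))

section AlmostPeriodic

variable {T : Set ℝ} {E F : Type*} [NormedAddCommGroup E] [NormedAddCommGroup F] {f : ℝ → E}

def IsTranslationNumber (T : Set ℝ) (f : ℝ → E) (ε τ : ℝ) : Prop :=
  ∀ t ∈ T, ‖f (t + τ) - f t‖ < ε

theorem IsTranslationNumber.sub {ε₁ ε₂ τ₁ τ₂ : ℝ} (h₁ : IsTranslationNumber T f ε₁ τ₁)
    (hτ₂ : τ₂ ∈ tsPi T) (h₂ : IsTranslationNumber T f ε₂ τ₂) :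
    IsTranslationNumber T f (ε₁ + ε₂) (τ₁ - τ₂) := by
  intro t ht
  have hs := (hτ₂ t ht).2
  have e : t + (τ₁ - τ₂) = t - τ₂ + τ₁ := by ring
  calc ‖f (t + (τ₁ - τ₂)) - f t‖
      = ‖(f (t - τ₂ + τ₁) - f (t - τ₂)) - (f (t - τ₂ + τ₂) - f (t - τ₂))‖ := by
        rw [e, sub_add_cancel, sub_sub_sub_cancel_right]
    _ ≤ _ := norm_sub_le _ _
    _ < ε₁ + ε₂ := add_lt_add (h₁ _ hs) (h₂ _ hs)

theorem APfun.uniformContinuousOn (hT : IsClosed T) (hf : APfun T f) :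
    UniformContinuousOn f T := by
  rw [Metric.uniformContinuousOn_iff]
  intro ε hε
  obtain ⟨l, -, hl⟩ := hf.2 (ε / 3) (by positivity)
  have hK : UniformContinuousOn f (T ∩ Icc (-1) (l + 1)) :=
    (isCompact_Icc.inter_left hT).uniformContinuousOn_of_continuous
      (hf.1.mono inter_subset_left)
  obtain ⟨δ, hδ, hfδ⟩ := Metric.uniformContinuousOn_iff.1 hK (ε / 3) (by positivity)
  refine ⟨min δ 1, by positivity, fun s hs t ht hst => ?_⟩
  rw [Real.dist_eq, abs_lt] at hst
  have := min_le_left δ 1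
  have := min_le_right δ 1
  obtain ⟨τ, hτ, ⟨hτl, hτr⟩, hfτ⟩ := hl (-t)
  have hnear : dist (f (s + τ)) (f (t + τ)) < ε / 3 :=
    hfδ _ ⟨(hτ s hs).1, by constructor <;> linarith⟩ _ ⟨(hτ t ht).1, by constructor <;> linarith⟩
      (by rw [Real.dist_eq, abs_lt]; constructor <;> linarith)
  calc dist (f s) (f t)
      ≤ dist (f s) (f (s + τ)) + dist (f (s + τ)) (f (t + τ)) + dist (f (t + τ)) (f t) :=
        dist_triangle4 _ _ _ _
    _ < ε / 3 + ε / 3 + ε / 3 := by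
        gcongr
        · rw [dist_comm, dist_eq_norm]; exact hfτ s hs
        · rw [dist_eq_norm]; exact hfτ t ht
    _ = ε := by ring

/-- Bohr's argument: the drift between translation numbers of `f` and of `g` chosen in the same
window is bounded, so finitely many windows realise every drift up to `δ`, and differences of
translation numbers with nearly equal drifts serve both functions. -/
theorem APfun.prodMk (hT : IsClosed T) {g : ℝ → F} (hf : APfun T f) (hg : APfun T g) :
    APfun T (fun t => (f t, g t)) := by
  refine ⟨hf.1.prodMk hg.1, fun ε hε => ?_⟩
  obtain ⟨δ, hδ, hgδ⟩ :=
    Metric.uniformContinuousOn_iff.1 (hg.uniformContinuousOn hT) (ε / 4) (by positivity)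
  obtain ⟨l₁, hl₁, hf'⟩ := hf.2 (ε / 4) (by positivity)
  obtain ⟨l₂, -, hg'⟩ := hg.2 (ε / 4) (by positivity)
  choose τf hτfP hτfI hτf using hf'
  choose τg hτgP hτgI hτg using hg'
  have hdrift : Bornology.IsBounded (range fun x => τf x - τg x) :=
    (Metric.isBounded_Icc (-l₂) l₁).subset <| range_subset_iff.2 fun x =>
      ⟨by linarith [(hτfI x).1, (hτgI x).2], by linarith [(hτfI x).2, (hτgI x).1]⟩
  obtain ⟨S, hS⟩ := exists_finset_forall_dist_lt hdrift hδ
  set M := ∑ y ∈ S, |τf y|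
  have hM : 0 ≤ M := Finset.sum_nonneg fun _ _ => abs_nonneg _
  refine ⟨l₁ + 2 * M, by positivity, fun x => ?_⟩
  obtain ⟨y, hyS, hy⟩ := hS (x + M)
  have hyM : |τf y| ≤ M := Finset.single_le_sum (fun y _ => abs_nonneg (τf y)) hyS
  refine ⟨τf (x + M) - τf y, sub_mem_tsPi (hτfP _) (hτfP y), ?_, fun t ht => ?_⟩
  · obtain ⟨h₁, h₂⟩ := hτfI (x + M)
    obtain ⟨h₃, h₄⟩ := abs_le.1 hyM
    constructor <;> linarith
  have hfτ := IsTranslationNumber.sub (hτf (x + M)) (hτfP y) (hτf y) t ht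
  have hgτ := IsTranslationNumber.sub (hτg (x + M)) (hτgP y) (hτg y) t ht
  have hgnear : ‖g (t + (τf (x + M) - τf y)) - g (t + (τg (x + M) - τg y))‖ < ε / 4 := by
    rw [← dist_eq_norm]
    refine hgδ _ ((sub_mem_tsPi (hτfP _) (hτfP y)) t ht).1
      _ ((sub_mem_tsPi (hτgP _) (hτgP y)) t ht).1 ?_
    rw [Real.dist_eq] at hy ⊢
    convert hy using 2
    ring
  dsimp only
  rw [Prod.norm_def]
  refine max_lt (by simp only [Prod.fst_sub]; linarith) ?_
  simp only [Prod.snd_sub]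
  linarith [norm_sub_le_norm_sub_add_norm_sub (g (t + (τf (x + M) - τf y)))
    (g (t + (τg (x + M) - τg y))) (g t)]

theorem APfun.comp_lipschitzWith {φ : E → F} {K : ℝ≥0} (hφ : LipschitzWith K φ)
    (hf : APfun T f) : APfun T (fun t => φ (f t)) := by
  refine ⟨hφ.continuous.comp_continuousOn hf.1, fun ε hε => ?_⟩
  obtain ⟨l, hl, hfl⟩ := hf.2 (ε / (K + 1)) (by positivity)
  refine ⟨l, hl, fun x => ?_⟩
  obtain ⟨τ, hτ, hτx, hfτ⟩ := hfl x
  refine ⟨τ, hτ, hτx, fun t ht => ?_⟩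
  calc ‖φ (f (t + τ)) - φ (f t)‖ ≤ K * ‖f (t + τ) - f t‖ := hφ.norm_sub_le _ _
    _ ≤ K * (ε / (K + 1)) := by gcongr; exact (hfτ t ht).le
    _ < ε := by
        rw [mul_div_assoc', div_lt_iff₀ (by positivity)]
        linarith

theorem APfun.add (hT : IsClosed T) {g : ℝ → E} (hf : APfun T f) (hg : APfun T g) :
    APfun T (fun t => f t + g t) :=
  (hf.prodMk hT hg).comp_lipschitzWith (LipschitzWith.prod_fst.add LipschitzWith.prod_snd)

theorem APfun.sub (hT : IsClosed T) {g : ℝ → E} (hf : APfun T f) (hg : APfun T g) :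
    APfun T (fun t => f t - g t) :=
  (hf.prodMk hT hg).comp_lipschitzWith (LipschitzWith.prod_fst.sub LipschitzWith.prod_snd)

theorem APfun.of_tendstoUniformlyOn {ι : Type*} {p : Filter ι} [p.NeBot] {f : ι → ℝ → E}
    {g : ℝ → E} (hf : ∀ i, APfun T (f i)) (hfg : TendstoUniformlyOn f g p T) : APfun T g := by
  refine ⟨hfg.continuousOn (Frequently.of_forall fun i => (hf i).1), fun ε hε => ?_⟩
  obtain ⟨i, hi⟩ := (Metric.tendstoUniformlyOn_iff.1 hfg (ε / 3) (by positivity)).exists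
  obtain ⟨l, hl, hfl⟩ := (hf i).2 (ε / 3) (by positivity)
  refine ⟨l, hl, fun x => ?_⟩
  obtain ⟨τ, hτ, hτx, hfτ⟩ := hfl x
  refine ⟨τ, hτ, hτx, fun t ht => ?_⟩
  rw [← dist_eq_norm]
  calc dist (g (t + τ)) (g t)
      ≤ dist (g (t + τ)) (f i (t + τ)) + dist (f i (t + τ)) (f i t) + dist (f i t) (g t) :=
        dist_triangle4 _ _ _ _
    _ < ε / 3 + ε / 3 + ε / 3 := by
        gcongr
        · exact hi _ (hτ t ht).1
        · rw [dist_eq_norm]; exact hfτ t ht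
        · rw [dist_comm]; exact hi t ht
    _ = ε := by ring

end AlmostPeriodic

section RadialTruncation

variable {E : Type*} [NormedAddCommGroup E] [NormedSpace ℝ E] {d : ℝ}

noncomputable def radialTrunc (d : ℝ) (x : E) : E := (d / max d ‖x‖) • x

theorem norm_radialTrunc_le (hd : 0 < d) (x : E) : ‖radialTrunc d x‖ ≤ d := by
  have hm : 0 < max d ‖x‖ := lt_max_of_lt_left hd
  rw [radialTrunc, norm_smul, Real.norm_of_nonneg (by positivity), div_mul_eq_mul_div,
    div_le_iff₀ hm]
  exact mul_le_mul_of_nonneg_left (le_max_right _ _) hd.le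

theorem norm_sub_radialTrunc_le (hd : 0 < d) {c : ℝ} (hc : 0 ≤ c) {x : E} (hx : ‖x‖ ≤ d + c) :
    ‖x - radialTrunc d x‖ ≤ c := by
  have hm : 0 < max d ‖x‖ := lt_max_of_lt_left hd
  have hdm : d / max d ‖x‖ ≤ 1 := (div_le_one hm).2 (le_max_left _ _)
  have e : x - (d / max d ‖x‖) • x = (1 - d / max d ‖x‖) • x := by rw [sub_smul, one_smul]
  rw [radialTrunc, e, norm_smul, Real.norm_of_nonneg (by linarith)]
  calc (1 - d / max d ‖x‖) * ‖x‖ ≤ (1 - d / max d ‖x‖) * max d ‖x‖ := by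
        gcongr
        exact le_max_right _ _
    _ = max d ‖x‖ - d := by field_simp
    _ ≤ c := by rw [← max_sub_sub_right, sub_self]; exact max_le hc (by linarith)

theorem lipschitzWith_radialTrunc (hd : 0 < d) : LipschitzWith 2 (radialTrunc (E := E) d) := by
  refine LipschitzWith.of_dist_le_mul fun x y => ?_
  rw [dist_eq_norm, dist_eq_norm, radialTrunc, radialTrunc, NNReal.coe_ofNat]
  set mx := max d ‖x‖
  set my := max d ‖y‖
  have hmx : 0 < mx := lt_max_of_lt_left hd
  have hmy : 0 < my := lt_max_of_lt_left hd
  have h₁ : d / mx ≤ 1 := (div_le_one hmx).2 (le_max_left _ _)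
  have h₂ : ‖y‖ / my ≤ 1 := (div_le_one hmy).2 (le_max_right _ _)
  have hm : |my - mx| ≤ ‖x - y‖ := by
    have := abs_max_sub_max_le_abs ‖y‖ ‖x‖ d
    rw [max_comm ‖y‖, max_comm ‖x‖] at this
    exact this.trans (abs_norm_sub_norm_le y x) |>.trans_eq (norm_sub_rev y x)
  have key : |d / mx - d / my| * ‖y‖ = d / mx * (‖y‖ / my) * |my - mx| := by
    have e : d / mx - d / my = d / mx * (1 / my) * (my - mx) := by field_simp
    rw [e, abs_mul, abs_mul, abs_of_pos (by positivity : 0 < d / mx),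
      abs_of_pos (by positivity : 0 < 1 / my)]
    ring
  calc ‖(d / mx) • x - (d / my) • y‖ = ‖(d / mx) • (x - y) + (d / mx - d / my) • y‖ := by
        rw [smul_sub, sub_smul]; abel_nf
    _ ≤ d / mx * ‖x - y‖ + |d / mx - d / my| * ‖y‖ := by
        refine (norm_add_le _ _).trans_eq ?_
        rw [norm_smul, norm_smul, Real.norm_of_nonneg (by positivity), Real.norm_eq_abs]
    _ ≤ 1 * ‖x - y‖ + 1 * 1 * ‖x - y‖ := by
        rw [key]
        gcongr
    _ = 2 * ‖x - y‖ := by ring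

end RadialTruncation

section Ergodic

variable {T : Set ℝ} {u : ℝ → ℝ} {E : Type*} [NormedAddCommGroup E]

noncomputable def weightedMean (T : Set ℝ) (u : ℝ → ℝ) (φ : ℝ → E) (r : ℝ) : ℝ :=
  (uQ T u r)⁻¹ * ∫ t in Qr T r, ‖φ t‖ * u t ∂(deltaMeasure T)

theorem measurableSet_Qr (hT : IsClosed T) (r : ℝ) : MeasurableSet (Qr T r) :=
  measurableSet_Icc.inter hT.measurableSet

theorem uQ_nonneg (hT : IsClosed T) (hu : UInfty T u) (r : ℝ) : 0 ≤ uQ T u r :=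
  setIntegral_nonneg (measurableSet_Qr hT r) fun t ht => (hu.2.1 t ht.2).le

theorem weightedMean_nonneg (hT : IsClosed T) (hu : UInfty T u) (φ : ℝ → E) (r : ℝ) :
    0 ≤ weightedMean T u φ r :=
  mul_nonneg (inv_nonneg.2 (uQ_nonneg hT hu r)) <|
    setIntegral_nonneg (measurableSet_Qr hT r) fun t ht =>
      mul_nonneg (norm_nonneg _) (hu.2.1 t ht.2).le

theorem BCfun.integrableOn_norm_mul (hT : IsClosed T) (hu : UInfty T u) {φ : ℝ → E}
    (hφ : BCfun T φ) (r : ℝ) :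
    IntegrableOn (fun t => ‖φ t‖ * u t) (Qr T r) (deltaMeasure T) := by
  obtain ⟨C, hC⟩ := hφ.2
  have hQ := measurableSet_Qr hT r
  refine Integrable.mono' ((hu.2.2.1 _ (Metric.isBounded_Icc _ _)).const_mul C) ?_ ?_
  · exact ((hφ.1.mono inter_subset_right).norm.aestronglyMeasurable hQ).mul
      hu.1.aestronglyMeasurable.restrict
  · filter_upwards [ae_restrict_mem hQ] with t ht
    have hu0 := (hu.2.1 t ht.2).le
    rw [norm_mul, norm_norm, Real.norm_of_nonneg hu0]
    exact mul_le_mul_of_nonneg_right (hC t ht.2) hu0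

theorem weightedMean_le (hT : IsClosed T) (hu : UInfty T u) {φ ψ₁ ψ₂ : ℝ → E}
    (h₁ : BCfun T ψ₁) (h₂ : BCfun T ψ₂) {c : ℝ} (hc : 0 ≤ c)
    (hle : ∀ t ∈ T, ‖φ t‖ ≤ ‖ψ₁ t‖ + ‖ψ₂ t‖ + c) (r : ℝ) :
    weightedMean T u φ r ≤ weightedMean T u ψ₁ r + weightedMean T u ψ₂ r + c := by
  have hQ := measurableSet_Qr hT r
  have hI₁ := h₁.integrableOn_norm_mul hT hu r
  have hI₂ := h₂.integrableOn_norm_mul hT hu r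
  have hIu : IntegrableOn (fun t => c * u t) (Qr T r) (deltaMeasure T) :=
    (hu.2.2.1 _ (Metric.isBounded_Icc _ _)).const_mul c
  have hint : ∫ t in Qr T r, ‖φ t‖ * u t ∂(deltaMeasure T) ≤
      (∫ t in Qr T r, ‖ψ₁ t‖ * u t ∂(deltaMeasure T)) +
        (∫ t in Qr T r, ‖ψ₂ t‖ * u t ∂(deltaMeasure T)) + c * uQ T u r := by
    have hI₁₂ : IntegrableOn (fun t => ‖ψ₁ t‖ * u t + ‖ψ₂ t‖ * u t) (Qr T r) (deltaMeasure T) :=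
      hI₁.add hI₂
    rw [uQ, ← integral_const_mul, ← integral_add hI₁ hI₂, ← integral_add hI₁₂ hIu]
    refine integral_mono_of_nonneg ?_ (hI₁₂.add hIu) ?_
    · filter_upwards [ae_restrict_mem hQ] with t ht
      exact mul_nonneg (norm_nonneg _) (hu.2.1 t ht.2).le
    · filter_upwards [ae_restrict_mem hQ] with t ht
      have := mul_le_mul_of_nonneg_right (hle t ht.2) (hu.2.1 t ht.2).le
      linarith
  have hQ0 := uQ_nonneg hT hu r
  calc weightedMean T u φ r
      ≤ (uQ T u r)⁻¹ * ((∫ t in Qr T r, ‖ψ₁ t‖ * u t ∂(deltaMeasure T)) +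
        (∫ t in Qr T r, ‖ψ₂ t‖ * u t ∂(deltaMeasure T)) + c * uQ T u r) :=
        mul_le_mul_of_nonneg_left hint (inv_nonneg.2 hQ0)
    _ = weightedMean T u ψ₁ r + weightedMean T u ψ₂ r + c * ((uQ T u r)⁻¹ * uQ T u r) := by
        rw [weightedMean, weightedMean]; ring
    _ ≤ weightedMean T u ψ₁ r + weightedMean T u ψ₂ r + c := by
        gcongr
        exact mul_le_of_le_one_right hc (inv_mul_le_one_of_le₀ le_rfl hQ0)

theorem PAP0fun.of_norm_le_add (hT : IsClosed T) (hu : UInfty T u) {φ ψ₁ ψ₂ : ℝ → E}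
    (hφ : ContinuousOn φ T) (h₁ : PAP0fun T u ψ₁) (h₂ : PAP0fun T u ψ₂)
    (hle : ∀ t ∈ T, ‖φ t‖ ≤ ‖ψ₁ t‖ + ‖ψ₂ t‖) : PAP0fun T u φ := by
  obtain ⟨C₁, hC₁⟩ := h₁.1.2
  obtain ⟨C₂, hC₂⟩ := h₂.1.2
  refine ⟨⟨hφ, C₁ + C₂, fun t ht => (hle t ht).trans (add_le_add (hC₁ t ht) (hC₂ t ht))⟩, ?_⟩
  show Tendsto (weightedMean T u φ) _ _
  have h : Tendsto (fun r => weightedMean T u ψ₁ r + weightedMean T u ψ₂ r) (alongPi T) (𝓝 0) := by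
    have h := h₁.2.add h₂.2
    rwa [add_zero] at h
  refine squeeze_zero (weightedMean_nonneg hT hu φ) (fun r => ?_) h
  simpa using weightedMean_le hT hu h₁.1 h₂.1 le_rfl (fun t ht => by simpa using hle t ht) r

theorem PAP0fun.add (hT : IsClosed T) (hu : UInfty T u) {φ ψ : ℝ → E} (hφ : PAP0fun T u φ)
    (hψ : PAP0fun T u ψ) : PAP0fun T u (fun t => φ t + ψ t) :=
  .of_norm_le_add hT hu (hφ.1.1.add hψ.1.1) hφ hψ fun _ _ => norm_add_le _ _

theorem PAP0fun.sub (hT : IsClosed T) (hu : UInfty T u) {φ ψ : ℝ → E} (hφ : PAP0fun T u φ)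
    (hψ : PAP0fun T u ψ) : PAP0fun T u (fun t => φ t - ψ t) :=
  .of_norm_le_add hT hu (hφ.1.1.sub hψ.1.1) hφ hψ fun _ _ => norm_sub_le _ _

theorem PAP0fun.of_norm_le (hT : IsClosed T) (hu : UInfty T u) {φ ψ : ℝ → E}
    (hφ : ContinuousOn φ T) (hψ : PAP0fun T u ψ) (hle : ∀ t ∈ T, ‖φ t‖ ≤ ‖ψ t‖) :
    PAP0fun T u φ :=
  .of_norm_le_add hT hu hφ hψ hψ fun t ht => (hle t ht).trans (le_add_of_nonneg_right (norm_nonneg _))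

theorem BCfun.of_tendstoUniformlyOn {ι : Type*} {p : Filter ι} [p.NeBot] {f : ι → ℝ → E}
    {g : ℝ → E} (hf : ∀ i, BCfun T (f i)) (hfg : TendstoUniformlyOn f g p T) : BCfun T g := by
  refine ⟨hfg.continuousOn (Frequently.of_forall fun i => (hf i).1), ?_⟩
  obtain ⟨i, hi⟩ := (Metric.tendstoUniformlyOn_iff.1 hfg 1 one_pos).exists
  obtain ⟨C, hC⟩ := (hf i).2
  refine ⟨C + 1, fun t ht => ?_⟩
  calc ‖g t‖ ≤ ‖f i t‖ + dist (g t) (f i t) := by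
        rw [dist_eq_norm]; exact norm_le_norm_add_norm_sub' _ _
    _ ≤ C + 1 := add_le_add (hC t ht) (hi t ht).le

theorem PAP0fun.of_tendstoUniformlyOn (hT : IsClosed T) (hu : UInfty T u) {ι : Type*}
    {p : Filter ι} [p.NeBot] {f : ι → ℝ → E} {g : ℝ → E} (hf : ∀ i, PAP0fun T u (f i))
    (hfg : TendstoUniformlyOn f g p T) : PAP0fun T u g := by
  refine ⟨.of_tendstoUniformlyOn (fun i => (hf i).1) hfg, tendsto_order.2
    ⟨fun a ha => Eventually.of_forall fun r => ha.trans_le (weightedMean_nonneg hT hu g r),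
      fun ε hε => ?_⟩⟩
  obtain ⟨i, hi⟩ := (Metric.tendstoUniformlyOn_iff.1 hfg (ε / 2) (by positivity)).exists
  filter_upwards [(tendsto_order.1 (hf i).2).2 (ε / 4) (by positivity)] with r hr
  have := weightedMean_le hT hu (hf i).1 (hf i).1 (by positivity : 0 ≤ ε / 2) (φ := g)
    (fun t ht => by
      have := norm_le_norm_add_norm_sub' (g t) (f i t)
      rw [← dist_eq_norm] at this
      linarith [hi t ht, norm_nonneg (f i t)]) r
  change weightedMean T u g r < ε
  change weightedMean T u (f i) r < ε / 4 at hr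
  linarith

end Ergodic

section UniformLimits

variable {α β ι : Type*}

theorem tendstoUniformlyOn_of_forall_dist_le [PseudoMetricSpace β] {p : Filter ι}
    {F : ι → α → β} {f : α → β} {s : Set α} {b : ι → ℝ} (hb : Tendsto b p (𝓝 0))
    (h : ∀ i, ∀ x ∈ s, dist (F i x) (f x) ≤ b i) : TendstoUniformlyOn F f p s :=
  Metric.tendstoUniformlyOn_iff.2 fun ε hε => (hb.eventually (gt_mem_nhds hε)).mono
    fun i hi x hx => by rw [dist_comm]; exact (h i x hx).trans_lt hi

theorem UniformCauchySeqOn.exists_tendstoUniformlyOn [UniformSpace β] [CompleteSpace β]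
    [Nonempty β] {p : Filter ι} [p.NeBot] {F : ι → α → β} {s : Set α}
    (hF : UniformCauchySeqOn F p s) : ∃ f, TendstoUniformlyOn F f p s :=
  ⟨fun x => lim (map (fun i => F i x) p), hF.tendstoUniformlyOn_of_tendsto fun _ hx =>
    le_nhds_lim (CompleteSpace.complete (hF.cauchy_map hx))⟩

theorem exists_tendstoUniformlyOn_of_dist_le_geometric_two [PseudoMetricSpace β]
    [CompleteSpace β] [Nonempty β] {F : ℕ → α → β} {s : Set α} {C : ℝ}
    (h : ∀ n, ∀ x ∈ s, dist (F n x) (F (n + 1) x) ≤ C / 2 / 2 ^ n) :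
    ∃ f, TendstoUniformlyOn F f atTop s := by
  have hlim : ∀ x ∈ s, Tendsto (fun n => F n x) atTop (𝓝 (limUnder atTop fun n => F n x)) :=
    fun x hx => (cauchySeq_of_le_geometric_two fun n => h n x hx).tendsto_limUnder
  exact ⟨_, tendstoUniformlyOn_of_forall_dist_le
    (tendsto_const_nhds.div_atTop (tendsto_pow_atTop_atTop_of_one_lt one_lt_two))
    fun n x hx => dist_le_of_le_geometric_two_of_tendsto (fun n => h n x hx) (hlim x hx) n⟩

end UniformLimits

section Completeness

variable {T : Set ℝ} {u : ℝ → ℝ} {E : Type*} [NormedAddCommGroup E]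

def apParts (T : Set ℝ) (u : ℝ → ℝ) (f : ℝ → E) : Set (ℝ → E) :=
  {g | APfun T g ∧ ∃ h, PAP0fun T u h ∧ ∀ t ∈ T, f t = g t + h t}

theorem exists_mem_apParts_near [NormedSpace ℝ E] (hT : IsClosed T) (hu : UInfty T u)
    {f f' g g' : ℝ → E} (hg : g ∈ apParts T u f) (hg' : g' ∈ apParts T u f') {δ : ℝ}
    (hδ : 0 < δ) (hff' : ∀ t ∈ T, ‖f' t - f t‖ ≤ δ) :
    ∃ g'' ∈ apParts T u f', ∀ t ∈ T, ‖g'' t - g t‖ ≤ δ := by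
  obtain ⟨hgAP, h, hh, hfgh⟩ := hg
  obtain ⟨hg'AP, h', hh', hfgh'⟩ := hg'
  set a := fun t => g' t - g t
  have ha : APfun T a := hg'AP.sub hT hgAP
  have hab : ∀ t ∈ T, ‖a t‖ ≤ δ + ‖h' t - h t‖ := fun t ht => by
    have e : a t = (f' t - f t) - (h' t - h t) := by
      simp only [a, hfgh t ht, hfgh' t ht]; abel
    rw [e]
    linarith [norm_sub_le (f' t - f t) (h' t - h t), hff' t ht]
  set ρ := fun t => radialTrunc δ (a t)
  have hρ : APfun T ρ := ha.comp_lipschitzWith (lipschitzWith_radialTrunc hδ)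
  have hψ : PAP0fun T u (fun t => a t - ρ t) :=
    .of_norm_le hT hu (ha.1.sub hρ.1) (hh'.sub hT hu hh) fun t ht =>
      norm_sub_radialTrunc_le hδ (norm_nonneg _) (hab t ht)
  refine ⟨fun t => g t + ρ t, ⟨hgAP.add hT hρ, fun t => h' t + (a t - ρ t),
    hh'.add hT hu hψ, fun t ht => ?_⟩, fun t _ => ?_⟩
  · rw [hfgh' t ht]; simp only [a]; abel
  · simpa using norm_radialTrunc_le hδ (a t)

theorem PAPfun.exists_mem_apParts {f : ℝ → E} (hf : PAPfun T u f) : ∃ g, g ∈ apParts T u f :=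
  let ⟨g, h, hg, hh, hfgh⟩ := hf
  ⟨g, hg, h, hh, hfgh⟩

theorem exists_apParts_seq [NormedSpace ℝ E] (hT : IsClosed T) (hu : UInfty T u)
    {f : ℕ → ℝ → E} (hf : ∀ j, PAPfun T u (f j)) {b : ℕ → ℝ} (hb : ∀ j, 0 < b j)
    (hfb : ∀ j, ∀ t ∈ T, ‖f (j + 1) t - f j t‖ ≤ b j) :
    ∃ G : ℕ → ℝ → E, (∀ j, G j ∈ apParts T u (f j)) ∧
      ∀ j, ∀ t ∈ T, ‖G (j + 1) t - G j t‖ ≤ b j := by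
  have hstep : ∀ j (g : apParts T u (f j)), ∃ g' : apParts T u (f (j + 1)),
      ∀ t ∈ T, ‖(g' : ℝ → E) t - (g : ℝ → E) t‖ ≤ b j := fun j g =>
    let ⟨_, hg'⟩ := (hf (j + 1)).exists_mem_apParts
    let ⟨g', hg', hgg'⟩ := exists_mem_apParts_near hT hu g.2 hg' (hb j) (hfb j)
    ⟨⟨g', hg'⟩, hgg'⟩
  choose next hnext using hstep
  obtain ⟨g₀, hg₀⟩ := (hf 0).exists_mem_apParts
  let G : (j : ℕ) → apParts T u (f j) := fun j =>
    Nat.rec (motive := fun j => apParts T u (f j)) ⟨g₀, hg₀⟩ next j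
  exact ⟨fun j => G j, fun j => (G j).2, fun j => hnext j (G j)⟩

theorem PAPfun.of_tendstoUniformlyOn [NormedSpace ℝ E] [CompleteSpace E] (hT : IsClosed T)
    (hu : UInfty T u) {ι : Type*} {p : Filter ι} [p.NeBot] {f : ι → ℝ → E} {F : ℝ → E}
    (hf : ∀ i, PAPfun T u (f i)) (hfF : TendstoUniformlyOn f F p T) : PAPfun T u F := by
  have happrox : ∀ j : ℕ, ∃ i, ∀ t ∈ T, dist (f i t) (F t) ≤ 1 / 4 / 2 ^ j := fun j =>
    (Metric.tendstoUniformlyOn_iff.1 hfF (1 / 4 / 2 ^ j) (by positivity)).exists.imp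
      fun i hi t ht => by rw [dist_comm]; exact (hi t ht).le
  choose m hm using happrox
  obtain ⟨G, hG, hGG⟩ := exists_apParts_seq hT hu (fun j => hf (m j))
    (b := fun j => 1 / 2 / 2 ^ j) (fun j => by positivity) fun j t ht => by
      have key : (1 : ℝ) / 4 / 2 ^ (j + 1) + 1 / 4 / 2 ^ j ≤ 1 / 2 / 2 ^ j := by
        rw [pow_succ]; field_simp; norm_num
      rw [← dist_eq_norm]
      linarith [dist_triangle_right (f (m (j + 1)) t) (f (m j) t) (F t), hm (j + 1) t ht,
        hm j t ht]
  obtain ⟨g, hg⟩ := exists_tendstoUniformlyOn_of_dist_le_geometric_two (F := G) fun j t ht => by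
    rw [dist_comm, dist_eq_norm]; exact hGG j t ht
  choose h hh hfGh using fun j => (hG j).2
  have hfm : TendstoUniformlyOn (fun j => f (m j)) F atTop T :=
    tendstoUniformlyOn_of_forall_dist_le
      (tendsto_const_nhds.div_atTop (tendsto_pow_atTop_atTop_of_one_lt one_lt_two)) hm
  have hH : TendstoUniformlyOn h (fun t => F t - g t) atTop T :=
    (hfm.sub hg).congr <| Eventually.of_forall fun j t ht => by simp [hfGh j t ht]
  exact ⟨g, fun t => F t - g t, .of_tendstoUniformlyOn (fun j => (hG j).1) hg,
    .of_tendstoUniformlyOn hT hu hh hH, fun t _ => (add_sub_cancel (g t) (F t)).symm⟩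

end Completeness

/-- Completeness of `(PAP(T,ℝⁿ,u), ‖·‖_∞)` for `u ∈ U_∞^Inv`: every sequence in `PAP(T,ℝⁿ,u)`
that is uniformly Cauchy on `T` converges uniformly on `T` to a member of `PAP(T,ℝⁿ,u)`. -/
theorem pap_complete {n : ℕ} (T : Set ℝ) (hT : APTimeScale T)
    (u : ℝ → ℝ) (hu : UInftyInv T u)
    (f : ℕ → ℝ → Fin n → ℝ) (hfm : ∀ m, PAPfun T u (f m))
    (hcauchy : ∀ ε > 0, ∃ N : ℕ, ∀ m ≥ N, ∀ k ≥ N, ∀ t ∈ T, ‖f m t - f k t‖ ≤ ε) :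
    ∃ g : ℝ → Fin n → ℝ, PAPfun T u g ∧
      ∀ ε > 0, ∃ N : ℕ, ∀ m ≥ N, ∀ t ∈ T, ‖f m t - g t‖ ≤ ε := by
  have hf : UniformCauchySeqOn f atTop T := Metric.uniformCauchySeqOn_iff.2 fun ε hε => by
    obtain ⟨N, hN⟩ := hcauchy (ε / 2) (by positivity)
    refine ⟨N, fun m hm k hk t ht => ?_⟩
    rw [dist_eq_norm]
    exact (hN m hm k hk t ht).trans_lt (half_lt_self hε)
  obtain ⟨g, hg⟩ := hf.exists_tendstoUniformlyOn
  refine ⟨g, .of_tendstoUniformlyOn hT.2.1 hu.1 hfm hg, fun ε hε => ?_⟩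
  obtain ⟨N, hN⟩ := eventually_atTop.1 (Metric.tendstoUniformlyOn_iff.1 hg ε hε)
  exact ⟨N, fun m hm t ht => by rw [← dist_eq_norm, dist_comm]; exact (hN m hm t ht).le⟩
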